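/- Let S be a numerical semigroup that is neither ordinary nor almost-ordinary, and suppose there exists a gap x of S with F(S) - m(S) + 1 ≤ x < F(S). Then u(S) = max(SG(S) \ {F(S)}), i.e., the sub-Frobenius number is the largest special gap different from F(S). In particular u(S) is a special gap of S. -/

import Mathlib

open Set

/-- A numerical semigroup: a submonoid of ℕ with finite complement. -/
def IsNumSgp (S : Set ℕ) : Prop :=
  0 ∈ S ∧ (∀ a ∈ S, ∀ b ∈ S, a + b ∈ S) ∧ Sᶜ.Finite

/-- The Frobenius number: the largest gap. -/
noncomputable def frob (S : Set ℕ) : ℕ := sSup Sᶜ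

/-- The multiplicity: the least nonzero element. -/
noncomputable def mult (S : Set ℕ) : ℕ := sInf (S \ {0})

/-- The genus: the number of gaps. -/
noncomputable def genus (S : Set ℕ) : ℕ := Sᶜ.ncard

/-- The number of left elements: elements of S smaller than the Frobenius number. -/
noncomputable def leftEls (S : Set ℕ) : ℕ := {s ∈ S | s < frob S}.ncard

/-- x is a minimal generator of S: nonzero and not a sum of two nonzero elements of S. -/
def IsMinGen (S : Set ℕ) (x : ℕ) : Prop :=
  x ∈ S ∧ x ≠ 0 ∧ ¬ ∃ a ∈ S, ∃ b ∈ S, a ≠ 0 ∧ b ≠ 0 ∧ x = a + b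

/-- The embedding dimension: number of minimal generators. -/
noncomputable def edim (S : Set ℕ) : ℕ := {x | IsMinGen S x}.ncard

/-- The set of special gaps of S. -/
def SG (S : Set ℕ) : Set ℕ :=
  {h | h ∉ S ∧ 2 * h ∈ S ∧ ∀ s ∈ S, s ≠ 0 → h + s ∈ S}

/-- Irreducible numerical semigroup (characterization via special gaps). -/
def IsIrred (S : Set ℕ) : Prop := SG S = {frob S}

/-- Ordinary numerical semigroup. -/
def IsOrdinary (S : Set ℕ) : Prop := ∃ c, S = {0} ∪ {m | c ≤ m}

/-- Special numerical semigroup: every special gap other than F(S) is below the multiplicity. -/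
def IsSpecial (S : Set ℕ) : Prop := ∀ h ∈ SG S, h ≠ frob S → h < mult S

/-- The transform 𝒜, defined on non-special numerical semigroups. -/
noncomputable def Atrans (S : Set ℕ) : Set ℕ :=
  (S ∪ {sSup (SG S \ {frob S})}) \ {mult S}

/-- The sub-Frobenius number: the largest gap different from F(S). -/
noncomputable def subFrob (S : Set ℕ) : ℕ := sSup (Sᶜ \ {frob S})

/-- Almost-ordinary: exactly one gap greater than the multiplicity. -/
noncomputable def IsAlmostOrdinary (S : Set ℕ) : Prop := {h | h ∉ S ∧ mult S < h}.ncard = 1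

/-- The transform ℬ of Bras-Amorós. -/
noncomputable def Btrans (S : Set ℕ) : Set ℕ := (S \ {mult S}) ∪ {subFrob S}

/-!
Let `u = u(S)` and `m = m(S)`. The gap `x` gives `u ≥ x > F(S) - m`, so `u + s > F(S)` for every
nonzero `s ∈ S`. Moreover `2u ∈ S`: it exceeds `u`, and `2u = F(S)` would give `u < m`, leaving
`F(S)` as the only gap above `m` (`m < F(S)` since `S` is not ordinary). Hence `u` is special, and
it dominates every special gap other than `F(S)`, these being gaps other than `F(S)`.
-/

section FiniteComplement

variable {S : Set ℕ}

theorem mem_of_frob_lt (hfin : Sᶜ.Finite) {n : ℕ} (hn : frob S < n) : n ∈ S := by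
  by_contra h
  exact (le_csSup hfin.bddAbove h).not_gt hn

theorem frob_notMem_of_pos (hfin : Sᶜ.Finite) (hF : 0 < frob S) : frob S ∉ S :=
  Nat.sSup_mem (nonempty_iff_ne_empty.2 fun h => by simp [frob, h] at hF) hfin.bddAbove

theorem mult_le {s : ℕ} (hs : s ∈ S) (hs0 : s ≠ 0) : mult S ≤ s :=
  Nat.sInf_le ⟨hs, hs0⟩

theorem mult_mem (hfin : Sᶜ.Finite) : mult S ∈ S :=
  (Nat.sInf_mem (s := S \ {0}) ⟨frob S + 1, mem_of_frob_lt hfin (Nat.lt_succ_self _), by simp⟩).1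

theorem le_subFrob (hfin : Sᶜ.Finite) {x : ℕ} (hx : x ∉ S) (hxF : x ≠ frob S) :
    x ≤ subFrob S :=
  le_csSup hfin.sdiff.bddAbove ⟨hx, hxF⟩

theorem subFrob_mem_compl_diff (hfin : Sᶜ.Finite) {x : ℕ} (hx : x ∉ S) (hxF : x ≠ frob S) :
    subFrob S ∈ Sᶜ \ {frob S} :=
  Nat.sSup_mem ⟨x, hx, hxF⟩ hfin.sdiff.bddAbove

theorem mem_of_subFrob_lt (hfin : Sᶜ.Finite) {n : ℕ} (hn : subFrob S < n) (hnF : n ≠ frob S) :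
    n ∈ S := by
  by_contra h
  exact (le_subFrob hfin h hnF).not_gt hn

theorem mem_SG_of_frob_lt_add_mult (hfin : Sᶜ.Finite) {h : ℕ} (hh : h ∉ S) (h2h : 2 * h ∈ S)
    (hF : frob S < h + mult S) : h ∈ SG S :=
  ⟨hh, h2h, fun s hs hs0 => mem_of_frob_lt hfin (by have := mult_le hs hs0; omega)⟩

theorem isAlmostOrdinary_of_subFrob_lt_mult (hfin : Sᶜ.Finite) (hmF : mult S < frob S)
    (hum : subFrob S < mult S) : IsAlmostOrdinary S := by
  have hgaps : {h | h ∉ S ∧ mult S < h} = {frob S} := by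
    ext n
    simp only [mem_ofPred_eq, mem_singleton_iff]
    constructor
    · rintro ⟨hn, hmn⟩
      by_contra hnF
      have := le_subFrob hfin hn hnF
      omega
    · rintro rfl
      exact ⟨frob_notMem_of_pos hfin (by omega), hmF⟩
  simp [IsAlmostOrdinary, hgaps]

end FiniteComplement

theorem IsNumSgp.isOrdinary_of_frob_le_mult {S : Set ℕ} (hS : IsNumSgp S)
    (hFm : frob S ≤ mult S) : IsOrdinary S := by
  obtain ⟨h0, -, hfin⟩ := hS
  refine ⟨mult S, Set.ext fun n => ⟨fun hn => ?_, ?_⟩⟩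
  · by_cases hn0 : n = 0
    · exact Or.inl hn0
    · exact Or.inr (mult_le hn hn0)
  · rintro (rfl | hmn)
    · exact h0
    · rcases (show mult S ≤ n from hmn).eq_or_lt with rfl | hlt
      · exact mult_mem hfin
      · exact mem_of_frob_lt hfin (by omega)

theorem subFrob_is_max_special_gap (S : Set ℕ) (hS : IsNumSgp S)
    (hord : ¬ IsOrdinary S) (hao : ¬ IsAlmostOrdinary S)
    (hx : ∃ x : ℕ, x ∉ S ∧ frob S - mult S + 1 ≤ x ∧ x < frob S) :
    subFrob S = sSup (SG S \ {frob S}) ∧ subFrob S ∈ SG S := by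
  obtain ⟨x, hxS, hxm, hxF⟩ := hx
  have hfin := hS.2.2
  have hmF : mult S < frob S := not_le.1 fun h => hord (hS.isOrdinary_of_frob_le_mult h)
  obtain ⟨huS, huF⟩ := subFrob_mem_compl_diff hfin hxS hxF.ne
  have hxu := le_subFrob hfin hxS hxF.ne
  have hu0 : subFrob S ≠ 0 := fun h => huS (h ▸ hS.1)
  have h2u : 2 * subFrob S ∈ S := by
    refine mem_of_subFrob_lt hfin (by omega) fun h => hao ?_
    exact isAlmostOrdinary_of_subFrob_lt_mult hfin hmF (by omega)
  have huSG := mem_SG_of_frob_lt_add_mult hfin huS h2u (by omega)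
  have hmax : IsGreatest (SG S \ {frob S}) (subFrob S) :=
    ⟨⟨huSG, huF⟩, fun h hh => le_subFrob hfin hh.1.1 hh.2⟩
  exact ⟨hmax.csSup_eq.symm, huSG⟩
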